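/- Let β = (1+√5)/2 be the golden mean and α ∈ ((3β-2)/2, 4β-5). For the generalised β-transformations T_{α,0}(x) = βx+α on [-β,-1/β), βx on (-1/β,1), βx-α on (1,β], and T_{α,1}(x) = βx+α on [-β,-1), βx on (-1,1/β), βx-α on (1/β,β], one has: T_{α,0}(1⁻) = β, T_{α,1}(1⁻) = T_{α,j}(1⁺) = β - α for j = 0,1, and for any word u of length 2 over {0,1}, T_{α,u}(β) = β²(β-α) = T_{α,u}(β-α). In particular all random orbits of the left and right limits at the critical point 1 coincide at time 3. -/

import Mathlib

/-!
Near `1` each map agrees with a single affine branch, which gives the one-sided limits.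
For `β = φ` and `2φ - 2 < α < φ`, every map sends `β` to `β² - α > 1` and then to
`β(β² - α) - α`, while `β - α` and `β(β - α)` stay in the middle branch `[-1/β, 1/β)`,
so that orbit reaches `β²(β - α)`. The two endpoints agree because `β² = β + 1`.
-/

open Filter Topology

/-- The two generalised `β`-transformations `T_{α,0}` (`j = false`) and `T_{α,1}`
(`j = true`) on `[-β,β]`, with slope `β` and translations `0, ±α`.  The values at the
discontinuity points are chosen arbitrarily (claims at those points are about one-sided
limits). -/
noncomputable def genBeta (β α : ℝ) (j : Bool) (x : ℝ) : ℝ :=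
  match j with
  | false => if x < -(1/β) then β*x + α else if x ≤ 1 then β*x else β*x - α
  | true  => if x < -1 then β*x + α else if x < 1/β then β*x else β*x - α

/-- `T_{α,u} = T_{α,u_2} ∘ T_{α,u_1}` for a word `u = u_1 u_2`. -/
noncomputable def genBetaWord (β α : ℝ) (u : List Bool) (x : ℝ) : ℝ :=
  u.foldl (fun y j => genBeta β α j y) x

open Set Real goldenRatio

section Branches

variable {β α x : ℝ}

lemma genBeta_false_of_mem_Icc (hx : x ∈ Icc (-(1/β)) 1) : genBeta β α false x = β * x := by
  simp only [genBeta, if_neg (not_lt.mpr hx.1), if_pos hx.2]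

lemma genBeta_true_of_inv_le (hβ : 0 < β) (hx : 1/β ≤ x) : genBeta β α true x = β * x - α := by
  have hx' : -1 ≤ x := by linarith [one_div_pos.mpr hβ]
  simp only [genBeta, if_neg (not_lt.mpr hx'), if_neg (not_lt.mpr hx)]

lemma genBeta_of_one_lt (hβ : 1 ≤ β) (hx : 1 < x) (j : Bool) : genBeta β α j x = β * x - α := by
  cases j
  · have hx' : -(1/β) ≤ x := by linarith [one_div_pos.mpr (zero_lt_one.trans_le hβ)]
    simp only [genBeta, if_neg (not_lt.mpr hx'), if_neg (not_le.mpr hx)]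
  · have hinv : 1/β ≤ 1 := div_le_one_of_le₀ hβ (zero_le_one.trans hβ)
    exact genBeta_true_of_inv_le (zero_lt_one.trans_le hβ) (by linarith)

lemma genBeta_of_mem_Ico (hβ : 1 ≤ β) (hx : x ∈ Ico (-(1/β)) (1/β)) (j : Bool) :
    genBeta β α j x = β * x := by
  have hinv : 1/β ≤ 1 := div_le_one_of_le₀ hβ (zero_le_one.trans hβ)
  cases j
  · exact genBeta_false_of_mem_Icc ⟨hx.1, by linarith [hx.2]⟩
  · have hx' : -1 ≤ x := by linarith [hx.1]
    simp only [genBeta, if_neg (not_lt.mpr hx'), if_pos hx.2]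

end Branches

section OneSidedLimits

variable {β : ℝ} (α : ℝ)

lemma tendsto_genBeta_false_nhdsLT_one (hβ : 0 < β) :
    Tendsto (genBeta β α false) (𝓝[<] 1) (𝓝 β) := by
  have hlim : Tendsto (fun x => β * x) (𝓝[<] 1) (𝓝 β) := by
    simpa using ((continuous_const_mul β).tendsto 1).mono_left nhdsWithin_le_nhds
  refine hlim.congr' ?_
  filter_upwards [Ioo_mem_nhdsLT (show -(1/β) < 1 by linarith [one_div_pos.mpr hβ])] with x hx
  exact (genBeta_false_of_mem_Icc ⟨hx.1.le, hx.2.le⟩).symm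

lemma tendsto_affine_nhdsWithin (β : ℝ) (s : Set ℝ) :
    Tendsto (fun x => β * x - α) (𝓝[s] 1) (𝓝 (β - α)) := by
  have hcont : Continuous fun x : ℝ => β * x - α := by fun_prop
  simpa using (hcont.tendsto 1).mono_left nhdsWithin_le_nhds

lemma tendsto_genBeta_true_nhdsLT_one (hβ : 1 < β) :
    Tendsto (genBeta β α true) (𝓝[<] 1) (𝓝 (β - α)) := by
  refine (tendsto_affine_nhdsWithin α β _).congr' ?_
  filter_upwards [Ioo_mem_nhdsLT ((div_lt_one (zero_lt_one.trans hβ)).mpr hβ)] with x hx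
  exact (genBeta_true_of_inv_le (zero_lt_one.trans hβ) hx.1.le).symm

lemma tendsto_genBeta_nhdsGT_one (hβ : 1 ≤ β) (j : Bool) :
    Tendsto (genBeta β α j) (𝓝[>] 1) (𝓝 (β - α)) := by
  refine (tendsto_affine_nhdsWithin α β _).congr' ?_
  filter_upwards [self_mem_nhdsWithin] with x hx
  exact (genBeta_of_one_lt hβ hx j).symm

end OneSidedLimits

lemma genBetaWord_pair (β α : ℝ) (j₁ j₂ : Bool) (x : ℝ) :
    genBetaWord β α [j₁, j₂] x = genBeta β α j₂ (genBeta β α j₁ x) := rfl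

lemma one_div_goldenRatio : 1 / φ = φ - 1 := by
  rw [one_div, inv_goldenRatio, ← one_sub_goldenConj]; ring

section GoldenOrbits

variable {α : ℝ} (hα : α ∈ Ioo (2*φ - 2) φ)
include hα

lemma genBetaWord_goldenRatio_apply_goldenRatio (j₁ j₂ : Bool) :
    genBetaWord φ α [j₁, j₂] φ = φ^2 * (φ - α) := by
  rw [genBetaWord_pair, genBeta_of_one_lt one_lt_goldenRatio.le one_lt_goldenRatio,
    genBeta_of_one_lt one_lt_goldenRatio.le (by nlinarith [hα.2, goldenRatio_sq])]
  linear_combination α * goldenRatio_sq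

lemma genBetaWord_goldenRatio_apply_sub (j₁ j₂ : Bool) :
    genBetaWord φ α [j₁, j₂] (φ - α) = φ^2 * (φ - α) := by
  have h1 := one_lt_goldenRatio
  have hsub : φ - α ∈ Ico (-(1/φ)) (1/φ) := by
    rw [one_div_goldenRatio]; constructor <;> nlinarith [hα.1, hα.2, goldenRatio_sq]
  have hmul : φ * (φ - α) ∈ Ico (-(1/φ)) (1/φ) := by
    rw [one_div_goldenRatio]; constructor <;> nlinarith [hα.1, hα.2, goldenRatio_sq]
  rw [genBetaWord_pair, genBeta_of_mem_Ico h1.le hsub, genBeta_of_mem_Ico h1.le hmul]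
  ring

end GoldenOrbits

/-- Let `β = (1+√5)/2` and `α ∈ ((3β-2)/2, 4β-5)`.  Then `T_{α,0}(1⁻) = β`,
`T_{α,1}(1⁻) = T_{α,j}(1⁺) = β - α` for `j = 0,1`, and for any word `u` of length 2,
`T_{α,u}(β) = β²(β-α) = T_{α,u}(β-α)`: all random orbits of the one-sided limits at the
critical point `1` coincide at time `3`. -/
theorem stmt11 (α : ℝ)
    (hα : α ∈ Set.Ioo ((3*((1+Real.sqrt 5)/2)-2)/2) (4*((1+Real.sqrt 5)/2)-5)) :
    Tendsto (genBeta ((1+Real.sqrt 5)/2) α false) (𝓝[<] 1) (𝓝 ((1+Real.sqrt 5)/2)) ∧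
    Tendsto (genBeta ((1+Real.sqrt 5)/2) α true) (𝓝[<] 1)
      (𝓝 ((1+Real.sqrt 5)/2 - α)) ∧
    (∀ j : Bool, Tendsto (genBeta ((1+Real.sqrt 5)/2) α j) (𝓝[>] 1)
      (𝓝 ((1+Real.sqrt 5)/2 - α))) ∧
    (∀ u : List Bool, u.length = 2 →
      genBetaWord ((1+Real.sqrt 5)/2) α u ((1+Real.sqrt 5)/2)
        = ((1+Real.sqrt 5)/2)^2 * ((1+Real.sqrt 5)/2 - α) ∧
      genBetaWord ((1+Real.sqrt 5)/2) α u ((1+Real.sqrt 5)/2 - α)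
        = ((1+Real.sqrt 5)/2)^2 * ((1+Real.sqrt 5)/2 - α)) := by
  change α ∈ Ioo ((3*φ - 2)/2) (4*φ - 5) at hα
  have hφ : φ < 5/3 := by nlinarith [goldenRatio_sq, goldenRatio_pos]
  have hα' : α ∈ Ioo (2*φ - 2) φ := ⟨by linarith [hα.1, goldenRatio_lt_two], by linarith [hα.2]⟩
  refine ⟨tendsto_genBeta_false_nhdsLT_one α goldenRatio_pos,
    tendsto_genBeta_true_nhdsLT_one α one_lt_goldenRatio,
    tendsto_genBeta_nhdsGT_one α one_lt_goldenRatio.le, fun u hu => ?_⟩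
  obtain ⟨j₁, j₂, rfl⟩ := List.length_eq_two.mp hu
  exact ⟨genBetaWord_goldenRatio_apply_goldenRatio hα' j₁ j₂,
    genBetaWord_goldenRatio_apply_sub hα' j₁ j₂⟩
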